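/- Let A = (a_i)_{i∈ℤ} with each a_i ∈ {0,1} and b ∈ ℂ. Define on V = ⊕_{m∈ℤ} ℂ[∂]v_m: L_i λ v_m = (∂+b)v_{i+m} if (a_m,a_{i+m})=(0,0); = (∂+b+λ)v_{i+m} if (1,1); = v_{i+m} if (0,1); = (∂+b)(∂+b+λ)v_{i+m} if (1,0); and M_i λ v_m = Y_i λ v_m = 0. Then this defines a conformal module over the loop Schrödinger–Virasoro Lie conformal algebra csv; in particular, the action of the L_i is compatible on each v_m with the bracket [L_i λ L_j] = (∂+2λ)L_{i+j}. -/

import Mathlib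

open Polynomial

/-- Generators of the loop Schrödinger–Virasoro Lie conformal algebra csv. -/
inductive Gen : Type
  | L : ℤ → Gen
  | M : ℤ → Gen
  | Y : ℤ → Gen
  deriving DecidableEq

/-- The λ-bracket of generators of csv (λ evaluated at `l`, ∂ = `X`). -/
noncomputable def br (l : ℂ) : Gen → Gen → (Gen →₀ Polynomial ℂ)
  | Gen.L i, Gen.L j => Finsupp.single (Gen.L (i + j)) (X + C (2 * l))
  | Gen.L i, Gen.M j => Finsupp.single (Gen.M (i + j)) (X + C l)
  | Gen.M i, Gen.L j => Finsupp.single (Gen.M (i + j)) (C l)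
  | Gen.L i, Gen.Y j => Finsupp.single (Gen.Y (i + j)) (X + C ((3/2) * l))
  | Gen.Y i, Gen.L j => Finsupp.single (Gen.Y (i + j)) (C (1/2) * X + C ((3/2) * l))
  | Gen.Y i, Gen.Y j => Finsupp.single (Gen.M (i + j)) (X + C (2 * l))
  | _, _ => 0

/-- The ℂ[∂]-coefficient of v_{i+m} in L_i λ v_m for the module V_{A,b,0,0}, where
A = (a_i) ∈ {0,1}^∞ is encoded by A : ℤ → Bool (false ↔ 0, true ↔ 1). -/
noncomputable def coefA (A : ℤ → Bool) (b : ℂ) (l : ℂ) (i m : ℤ) : Polynomial ℂ :=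
  match A m, A (i + m) with
  | false, false => X + C b
  | true, true => X + C (b + l)
  | false, true => 1
  | true, false => (X + C b) * (X + C (b + l))

/-- The action on basis vectors of V = ⊕_{m∈ℤ} ℂ[∂]v_m:
L_i λ v_m as above, M_i λ v_m = Y_i λ v_m = 0. -/
noncomputable def actB (A : ℤ → Bool) (b : ℂ) (l : ℂ) : Gen → ℤ → (ℤ →₀ Polynomial ℂ)
  | Gen.L i, m => Finsupp.single (i + m) (coefA A b l i m)
  | _, _ => 0

lemma keyA (A : ℤ → Bool) (b l m : ℂ) (i j k : ℤ) :
    (coefA A b m j k).comp (X + C l) * coefA A b l i (j + k)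
      - (coefA A b l i k).comp (X + C m) * coefA A b m j (i + k)
    = C (l - m) * coefA A b (l + m) (i + j) k := by
  have e1 : j + (i + k) = i + (j + k) := by ring
  have e2 : i + j + k = i + (j + k) := by ring
  rcases h1 : A k <;> rcases h2 : A (j + k) <;> rcases h3 : A (i + k) <;>
    rcases h4 : A (i + (j + k)) <;>
  · simp only [coefA, h1, h2, h3, h4, e1, e2, add_comp, mul_comp, X_comp, C_comp,
      one_comp, map_add, map_sub, map_mul]
    ring

/-- For any A ∈ {0,1}^∞ and b ∈ ℂ, the above assignments define a conformal
module over csv: the compatibility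
g₁ λ (g₂ μ v_k) − g₂ μ (g₁ λ v_k) = [g₁ λ g₂]_{λ+μ} v_k holds for all pairs of
generators on every v_k (with g λ (q(∂)v_n) = q(∂+λ)·(g λ v_n) and
[p(∂)·h]_{ν} v_k = p(−ν)·(h ν v_k) by sesquilinearity). -/
theorem stmt_18 (A : ℤ → Bool) (b : ℂ) :
    ∀ (g₁ g₂ : Gen) (k : ℤ) (l m : ℂ),
      ((actB A b m g₂ k).sum fun n q => (q.comp (X + C l)) • actB A b l g₁ n)
        - ((actB A b l g₁ k).sum fun n q => (q.comp (X + C m)) • actB A b m g₂ n)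
        = (br l g₁ g₂).sum fun h p => (C (p.eval (-(l + m)))) • actB A b (l + m) h k := by
  intro g₁ g₂ k l m
  cases g₁ <;> cases g₂
  case L.L i j =>
    show ((Finsupp.single (j + k) (coefA A b m j k)).sum fun n q =>
        q.comp (X + C l) • Finsupp.single (i + n) (coefA A b l i n))
      - ((Finsupp.single (i + k) (coefA A b l i k)).sum fun n q =>
        q.comp (X + C m) • Finsupp.single (j + n) (coefA A b m j n))
      = (Finsupp.single (Gen.L (i + j)) (X + C (2 * l))).sum fun h p =>
          C (p.eval (-(l + m))) • actB A b (l + m) h k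
    rw [Finsupp.sum_single_index (by simp), Finsupp.sum_single_index (by simp),
      Finsupp.sum_single_index (by simp)]
    show _ = C ((X + C (2 * l)).eval (-(l + m))) •
      Finsupp.single ((i + j) + k) (coefA A b (l + m) (i + j) k)
    simp only [Finsupp.smul_single, smul_eq_mul]
    have e1 : j + (i + k) = i + (j + k) := by ring
    have e2 : (i + j) + k = i + (j + k) := by ring
    rw [e1, e2, ← Finsupp.single_sub]
    congr 1
    have he : (X + C (2 * l)).eval (-(l + m)) = l - m := by simp; ring
    rw [keyA, he]
  all_goals
    simp only [actB, br, Finsupp.sum_zero_index, Finsupp.sum_single_index,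
      smul_zero, Finsupp.sum_fun_zero, sub_zero, zero_sub, sub_self, neg_zero,
      eval_zero, map_zero, zero_smul, zero_comp]
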